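/- arXiv:2409.20295 — 11 statements merged into one kernel-verified Lean document; each statement's English description precedes it below -/
import Mathlib

section
/- Let A be a commutative ring with 1 in which the sum of any two radical ideals is a radical ideal, and suppose the poset of prime ideals of A under inclusion is a root system (every up-set of a prime is a chain). If p and q are prime ideals of A with 1 ∉ p + q, then p + q is a prime ideal of A. -/
/-!
A radical ideal is the intersection of the primes containing it. Every prime containing `p + q`
contains `p`, so in a root system these primes form a chain, and the intersection of a nonempty
chain of primes is prime.
-/

namespace Ideal

variable {A : Type*} [CommRing A]

theorem IsRadical.isPrime_of_isChain {I : Ideal A} (hI : I.IsRadical) (hne : I ≠ ⊤)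
    (hchain : IsChain (· ≤ ·) {J : Ideal A | I ≤ J ∧ J.IsPrime}) : I.IsPrime := by
  obtain ⟨M, hM, hIM⟩ := exists_le_maximal I hne
  rw [← hI.radical, radical_eq_sInf]
  exact sInf_isPrime_of_isChain ⟨M, hIM, hM.isPrime⟩ hchain fun J hJ => hJ.2

theorem isChain_primes_above_of_le {p I : Ideal A} (hp : p.IsPrime) (hpI : p ≤ I)
    (hroot : ∀ p q r : Ideal A, p.IsPrime → q.IsPrime → r.IsPrime →
      p ≤ q → p ≤ r → q ≤ r ∨ r ≤ q) :
    IsChain (· ≤ ·) {J : Ideal A | I ≤ J ∧ J.IsPrime} :=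
  fun _ hJ _ hK _ => hroot p _ _ hp hJ.2 hK.2 (hpI.trans hJ.1) (hpI.trans hK.1)

end Ideal

/-- In a commutative ring in which the sum of any two radical ideals is
radical, and whose prime spectrum is a root system under inclusion, the sum of two
prime ideals not containing 1 is a prime ideal. -/
theorem sum_of_primes_isPrime {A : Type*} [CommRing A]
    (hrad : ∀ I J : Ideal A, I.IsRadical → J.IsRadical → (I + J).IsRadical)
    (hroot : ∀ p q r : Ideal A, p.IsPrime → q.IsPrime → r.IsPrime →
      p ≤ q → p ≤ r → q ≤ r ∨ r ≤ q)
    (p q : Ideal A) (hp : p.IsPrime) (hq : q.IsPrime) (h1 : (1 : A) ∉ p + q) :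
    (p + q).IsPrime :=
  (hrad p q hp.isRadical hq.isRadical).isPrime_of_isChain
    ((Ideal.ne_top_iff_one _).mpr h1)
    (Ideal.isChain_primes_above_of_le hp le_sup_left hroot)
end

section
/- Let A be a commutative ring in which the sum of any two radical ideals is a radical ideal. Then the lattice of radical ideals of A, ordered by inclusion, with join given by sum of ideals and meet given by intersection, is a distributive lattice. -/
/-! Inside `I ⊓ (J + K)` every element squares into `I * (J + K) = I * J + I * K ≤ I ⊓ J + I ⊓ K`,
so the non-trivial inclusion holds up to radicals; the hypothesis that `I ⊓ J + I ⊓ K` is radical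
removes the radical. -/

theorem Ideal.inf_sup_le_radical_sup_inf {R : Type*} [CommSemiring R] (I J K : Ideal R) :
    I ⊓ (J ⊔ K) ≤ (I ⊓ J ⊔ I ⊓ K).radical :=
  calc I ⊓ (J ⊔ K) ≤ (I ⊓ (J ⊔ K)).radical := Ideal.le_radical
    _ = (I * (J ⊔ K)).radical := by rw [Ideal.radical_inf, Ideal.radical_mul]
    _ = (I * J ⊔ I * K).radical := by rw [Ideal.mul_sup]
    _ ≤ (I ⊓ J ⊔ I ⊓ K).radical :=
      Ideal.radical_mono (sup_le_sup Ideal.mul_le_inf Ideal.mul_le_inf)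

/-- If sums of radical ideals are radical, the lattice of radical ideals
(with join = sum and meet = intersection) is distributive. -/
theorem radical_ideals_distributive {A : Type*} [CommRing A]
    (hrad : ∀ I J : Ideal A, I.IsRadical → J.IsRadical → (I + J).IsRadical)
    (I J K : Ideal A) (hI : I.IsRadical) (hJ : J.IsRadical) (hK : K.IsRadical) :
    I ⊓ (J + K) = (I ⊓ J) + (I ⊓ K) := by
  have hsum : (I ⊓ J + I ⊓ K).IsRadical := hrad _ _ (hI.inf hJ) (hI.inf hK)
  simp only [Submodule.add_eq_sup] at hsum ⊢
  refine le_antisymm ?_ le_inf_sup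
  calc I ⊓ (J ⊔ K) ≤ (I ⊓ J ⊔ I ⊓ K).radical := Ideal.inf_sup_le_radical_sup_inf I J K
    _ = I ⊓ J ⊔ I ⊓ K := hsum.radical
end

section
/- Let V be a valuation ring of a field K such that K is real closed (as an ordered field under the unique ordering) and V is convex in K. Then the residue field V/m_V is a real closed field. -/
/-!
Convexity makes `1 + a²` a unit of `V` (its inverse lies in `[0, 1]`) and puts the square root
`|y|` of any nonnegative `b ∈ V` into `V` (as `|y| ≤ max 1 b`), so `-1` is not a square in the
residue field and every residue is a square up to sign. Odd-degree roots descend because a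
valuation ring is integrally closed: a monic lift of a residue polynomial has a root in `K`,
which is integral over `V`, hence lies in `V` and reduces to a root of the original.
-/

/-- A real closed (totally ordered) field: every nonnegative element is a square and
every polynomial of odd degree has a root. -/
def IsRealClosedOrderedField (K : Type*) [Field K] [LinearOrder K] [IsStrictOrderedRing K] : Prop :=
  (∀ x : K, 0 ≤ x → ∃ y : K, y ^ 2 = x) ∧
  ∀ p : Polynomial K, Odd p.natDegree → ∃ x : K, p.IsRoot x

/-- Order-free characterization of being a real closed field (under its unique
ordering): `-1` is not a square, every element is a square or the negative of a
square, and every polynomial of odd degree has a root. -/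
def IsRealClosedRing (F : Type*) [CommRing F] : Prop :=
  (¬ ∃ y : F, y ^ 2 = -1) ∧
  (∀ x : F, (∃ y : F, y ^ 2 = x) ∨ (∃ y : F, y ^ 2 = -x)) ∧
  ∀ p : Polynomial F, Odd p.natDegree → ∃ x : F, p.IsRoot x

open Polynomial

theorem Polynomial.exists_isRoot_of_odd_of_monic {F : Type*} [Field F]
    (h : ∀ p : F[X], p.Monic → Odd p.natDegree → ∃ x, p.IsRoot x)
    (p : F[X]) (hp : Odd p.natDegree) : ∃ x, p.IsRoot x := by
  have hp0 : p ≠ 0 := by rintro rfl; simp at hp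
  obtain ⟨x, hx⟩ := h _ (monic_mul_leadingCoeff_inv hp0)
    (by rwa [natDegree_mul_leadingCoeff_inv _ hp0])
  refine ⟨x, ?_⟩
  rw [IsRoot, eval_mul, eval_C, mul_eq_zero] at hx
  exact hx.resolve_right (inv_ne_zero (leadingCoeff_ne_zero.mpr hp0))

namespace Subring

section ValuationSubring

variable {K : Type*} [Field K] {V : Subring K}

theorem mem_of_isIntegral (hval : ∀ x : K, x ≠ 0 → x ∈ V ∨ x⁻¹ ∈ V) {x : K}
    (hx : IsIntegral V x) : x ∈ V := by
  let A := ValuationSubring.ofSubring V fun y ↦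
    (eq_or_ne y 0).elim (fun h ↦ .inl (h ▸ V.zero_mem)) (hval y)
  have : IsIntegrallyClosed V := inferInstanceAs (IsIntegrallyClosed A)
  have : IsFractionRing V K := inferInstanceAs (IsFractionRing A K)
  obtain ⟨y, rfl⟩ := IsIntegrallyClosed.isIntegral_iff.mp hx
  exact y.2

theorem exists_isRoot_of_surjective (hval : ∀ x : K, x ≠ 0 → x ∈ V ∨ x⁻¹ ∈ V)
    (hodd : ∀ p : K[X], Odd p.natDegree → ∃ x, p.IsRoot x)
    {F : Type*} [CommRing F] (f : V →+* F) (hf : Function.Surjective f)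
    (p : F[X]) (hmonic : p.Monic) (hp : Odd p.natDegree) : ∃ x, p.IsRoot x := by
  obtain ⟨q, rfl, hdeg, hq⟩ :=
    lifts_and_natDegree_eq_and_monic (map_surjective f hf p) hmonic
  obtain ⟨x, hx⟩ := hodd (q.map V.subtype) (by rwa [hq.natDegree_map, hdeg])
  rw [IsRoot, eval_map] at hx
  have hxV : x ∈ V := mem_of_isIntegral hval ⟨q, hq, hx⟩
  have hqx : q.IsRoot ⟨x, hxV⟩ :=
    Subtype.ext ((eval₂_hom V.subtype ⟨x, hxV⟩ (p := q)).symm.trans hx)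
  refine ⟨f ⟨x, hxV⟩, ?_⟩
  rw [IsRoot, eval_map, eval₂_hom, hqx.eq_zero, map_zero]

end ValuationSubring

section ConvexSubring

variable {K : Type*} [Field K] [LinearOrder K] [IsStrictOrderedRing K] {V : Subring K}

def IsConvex (V : Subring K) : Prop :=
  ∀ a b : K, 0 ≤ b → b ≤ a → a ∈ V → b ∈ V

theorem IsConvex.inv_mem_of_one_le (hconv : V.IsConvex) {x : K}
    (hx : 1 ≤ x) : x⁻¹ ∈ V :=
  hconv 1 _ (inv_nonneg.mpr (zero_le_one.trans hx)) (inv_le_one_of_one_le₀ hx) V.one_mem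

theorem IsConvex.isUnit_sq_add_one (hconv : V.IsConvex) (a : V) :
    IsUnit (a ^ 2 + 1) := by
  have h1 : (1 : K) ≤ (a : K) ^ 2 + 1 := le_add_of_nonneg_left (sq_nonneg _)
  refine .of_mul_eq_one ⟨_, hconv.inv_mem_of_one_le h1⟩ (Subtype.ext ?_)
  push_cast
  exact mul_inv_cancel₀ (zero_lt_one.trans_le h1).ne'

theorem IsConvex.exists_sq_eq_of_nonneg (hconv : V.IsConvex)
    (hsqrt : ∀ x : K, 0 ≤ x → ∃ y : K, y ^ 2 = x) (b : V) (hb : 0 ≤ (b : K)) :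
    ∃ z : V, z ^ 2 = b := by
  obtain ⟨y, hy⟩ := hsqrt _ hb
  rw [← sq_abs] at hy
  have hyV : |y| ∈ V := by
    rcases le_total |y| 1 with h1 | h1
    · exact hconv 1 |y| (abs_nonneg y) h1 V.one_mem
    · exact hconv b |y| (abs_nonneg y) (by nlinarith) b.2
  exact ⟨⟨|y|, hyV⟩, Subtype.ext hy⟩

theorem IsConvex.not_exists_sq_eq_neg_one_of_surjective (hconv : V.IsConvex)
    {R : Type*} [CommRing R] [Nontrivial R] (f : V →+* R) (hf : Function.Surjective f) :
    ¬ ∃ y : R, y ^ 2 = -1 := by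
  rintro ⟨y, hy⟩
  obtain ⟨a, rfl⟩ := hf y
  have hzero : f (a ^ 2 + 1) = 0 := by rw [map_add, map_pow, map_one, hy, neg_add_cancel]
  exact not_isUnit_zero (hzero ▸ (hconv.isUnit_sq_add_one a).map f)

theorem IsConvex.exists_sq_eq_or_neg_of_surjective (hconv : V.IsConvex)
    (hsqrt : ∀ x : K, 0 ≤ x → ∃ y : K, y ^ 2 = x) {R : Type*} [CommRing R] (f : V →+* R)
    (hf : Function.Surjective f) (x : R) :
    (∃ y : R, y ^ 2 = x) ∨ (∃ y : R, y ^ 2 = -x) := by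
  obtain ⟨a, rfl⟩ := hf x
  rcases le_total 0 (a : K) with ha | ha
  · obtain ⟨z, hz⟩ := hconv.exists_sq_eq_of_nonneg hsqrt a ha
    exact .inl ⟨f z, by rw [← map_pow, hz]⟩
  · obtain ⟨z, hz⟩ := hconv.exists_sq_eq_of_nonneg hsqrt (-a) (by simpa using ha)
    exact .inr ⟨f z, by rw [← map_pow, hz, map_neg]⟩

end ConvexSubring

end Subring

/-- If `V` is a convex valuation ring of a real closed field `K`, then
the residue field `V/m_V` is a real closed field. -/
theorem residueField_isRealClosed {K : Type*} [Field K] [LinearOrder K] [IsStrictOrderedRing K]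
    (hK : IsRealClosedOrderedField K) (V : Subring K)
    (hval : ∀ x : K, x ≠ 0 → x ∈ V ∨ x⁻¹ ∈ V)
    (hconv : ∀ a b : K, 0 ≤ b → b ≤ a → a ∈ V → b ∈ V)
    (m : Ideal V) (hm : m.IsMaximal) :
    IsRealClosedRing (V ⧸ m) := by
  let := Ideal.Quotient.field m
  have hmk := Ideal.Quotient.mk_surjective (I := m)
  have hV : V.IsConvex := hconv
  exact ⟨hV.not_exists_sq_eq_neg_one_of_surjective _ hmk,
    hV.exists_sq_eq_or_neg_of_surjective hK.1 _ hmk,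
    Polynomial.exists_isRoot_of_odd_of_monic
      (Subring.exists_isRoot_of_surjective hval hK.2 _ hmk)⟩
end

section
/- Let A be a domain which is a real closed ring (in particular: for all 0 ≤ a ≤ b in A there exists c with bc = a², and positive elements are squares). Then A equals its fraction field if and only if A is cofinal in its fraction field. -/
/-!
If `A` is cofinal, then for `0 < b ∈ A` there is `d ∈ A` with `b⁻¹ ≤ d`, i.e. `1 ≤ b * d`.
The division property with `a = 1` gives `c ∈ A` with `b * d * c = 1`, so
`b⁻¹ = d * c ∈ A`. Thus `A` is closed under inversion and contains every fraction.
-/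

section

variable {K : Type*} [Field K] [LinearOrder K] [IsStrictOrderedRing K] {A : Subring K}

theorem Subring.inv_mem_of_one_le
    (hdiv : ∀ a ∈ A, ∀ b ∈ A, 0 ≤ a → a ≤ b → ∃ c ∈ A, b * c = a ^ 2)
    {b : K} (hb : b ∈ A) (h1 : 1 ≤ b) : b⁻¹ ∈ A := by
  obtain ⟨c, hc, hbc⟩ := hdiv 1 A.one_mem b hb zero_le_one h1
  rw [one_pow] at hbc
  rwa [← eq_inv_of_mul_eq_one_right hbc]

theorem Subring.inv_mem_of_pos_of_cofinal (hinv : ∀ b ∈ A, 1 ≤ b → b⁻¹ ∈ A)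
    (hcof : ∀ x : K, ∃ b ∈ A, x ≤ b) {b : K} (hb : b ∈ A) (hpos : 0 < b) : b⁻¹ ∈ A := by
  obtain ⟨d, hd, hle⟩ := hcof b⁻¹
  have hd0 : d ≠ 0 := (lt_of_lt_of_le (inv_pos.2 hpos) hle).ne'
  have h1 : 1 ≤ b * d := by
    calc (1 : K) = b * b⁻¹ := (mul_inv_cancel₀ hpos.ne').symm
      _ ≤ b * d := mul_le_mul_of_nonneg_left hle hpos.le
  have hfactor : b⁻¹ = d * (b * d)⁻¹ := by field_simp
  rw [hfactor]
  exact A.mul_mem hd (hinv _ (A.mul_mem hb hd) h1)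

theorem Subring.inv_mem_of_ne_zero (hinv : ∀ b ∈ A, 0 < b → b⁻¹ ∈ A)
    {b : K} (hb : b ∈ A) (hne : b ≠ 0) : b⁻¹ ∈ A := by
  rcases hne.lt_or_gt with hneg | hpos
  · simpa using A.neg_mem (hinv (-b) (A.neg_mem hb) (neg_pos.2 hneg))
  · exact hinv b hb hpos

end

theorem Subring.mem_of_forall_eq_div {K : Type*} [Field K] {A : Subring K}
    (hfrac : ∀ x : K, ∃ a ∈ A, ∃ b ∈ A, b ≠ 0 ∧ x = a / b)
    (hinv : ∀ b ∈ A, b ≠ 0 → b⁻¹ ∈ A) (x : K) : x ∈ A := by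
  obtain ⟨a, ha, b, hb, hne, rfl⟩ := hfrac x
  exact div_eq_mul_inv a b ▸ A.mul_mem ha (hinv b hb hne)

theorem eq_fractionField_iff_cofinal_general {K : Type*} [Field K] [LinearOrder K] [IsStrictOrderedRing K]
    (A : Subring K)
    (hfrac : ∀ x : K, ∃ a ∈ A, ∃ b ∈ A, b ≠ 0 ∧ x = a / b)
    (hdiv : ∀ a ∈ A, ∀ b ∈ A, 0 ≤ a → a ≤ b → ∃ c ∈ A, b * c = a ^ 2) :
    (∀ x : K, x ∈ A) ↔ (∀ x : K, ∃ b ∈ A, x ≤ b) := by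
  refine ⟨fun h x => ⟨x, h x, le_rfl⟩, fun hcof => ?_⟩
  have hinv_one_le : ∀ b ∈ A, 1 ≤ b → b⁻¹ ∈ A := fun _ hb h1 =>
    Subring.inv_mem_of_one_le hdiv hb h1
  have hinv_pos : ∀ b ∈ A, 0 < b → b⁻¹ ∈ A := fun _ hb hpos =>
    Subring.inv_mem_of_pos_of_cofinal hinv_one_le hcof hb hpos
  exact Subring.mem_of_forall_eq_div hfrac fun _ hb hne =>
    Subring.inv_mem_of_ne_zero hinv_pos hb hne

/-- Let `A` be a real closed domain (realized as a subring of its ordered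
fraction field `K`, with nonnegative elements of `A` squares in `A`, and for all
`0 ≤ a ≤ b` in `A` some `c ∈ A` with `b * c = a ^ 2`). Then `A` equals its fraction
field iff `A` is cofinal in its fraction field. -/
theorem eq_fractionField_iff_cofinal {K : Type*} [Field K] [LinearOrder K] [IsStrictOrderedRing K]
    (A : Subring K)
    (hfrac : ∀ x : K, ∃ a ∈ A, ∃ b ∈ A, b ≠ 0 ∧ x = a / b)
    (hsq : ∀ a ∈ A, (0 : K) ≤ a → ∃ b ∈ A, b ^ 2 = a)
    (hdiv : ∀ a ∈ A, ∀ b ∈ A, 0 ≤ a → a ≤ b → ∃ c ∈ A, b * c = a ^ 2) :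
    (∀ x : K, x ∈ A) ↔ (∀ x : K, ∃ b ∈ A, x ≤ b) :=
  eq_fractionField_iff_cofinal_general A hfrac hdiv
end

section
/- Let A be a real closed domain with A ≠ qf(A), satisfying: for all 0 ≤ a ≤ b in A there exists c with bc = a². Then the convex hull V of A in qf(A) is a proper convex subring (hence a valuation ring of qf(A)), and A ∩ m_V = m_A, where m_A is the maximal ideal of the local ring A. -/
/-!
Let `V = {x | ∃ a ∈ A, |x| ≤ a}`. It is a subring since `|x + y| ≤ |x| + |y|` and
`|x y| = |x| |y|`, it is convex by construction, and it contains `x` or `x⁻¹` because one of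
them has absolute value at most `1`. The divisibility condition with `a = 1` says that every
`b ∈ A` with `1 ≤ b` is a unit of `A`. Hence if `q ∈ A` and `|q⁻¹| ≤ m ∈ A`, then
`1 ≤ |q| m`, so `|q⁻¹| = m (|q| m)⁻¹ ∈ A`: an element of `A` invertible in `V` is invertible
in `A`. This gives `A ∩ m_V = m_A`, and if `V` were all of `K` then every denominator would be
invertible in `A`, i.e. `A = K`.
-/

namespace Subring

variable {K : Type*} [Field K] [LinearOrder K] [IsStrictOrderedRing K] (A : Subring K)

def orderConvexHull : Subring K where
  carrier := {x | ∃ a ∈ A, |x| ≤ a}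
  zero_mem' := ⟨0, A.zero_mem, by simp⟩
  one_mem' := ⟨1, A.one_mem, by simp⟩
  add_mem' := by
    rintro x y ⟨a, ha, hx⟩ ⟨b, hb, hy⟩
    exact ⟨a + b, A.add_mem ha hb, (abs_add_le x y).trans (add_le_add hx hy)⟩
  mul_mem' := by
    rintro x y ⟨a, ha, hx⟩ ⟨b, hb, hy⟩
    refine ⟨a * b, A.mul_mem ha hb, ?_⟩
    rw [abs_mul]
    exact mul_le_mul hx hy (abs_nonneg y) ((abs_nonneg x).trans hx)
  neg_mem' := by
    rintro x ⟨a, ha, hx⟩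
    exact ⟨a, ha, by rwa [abs_neg]⟩

variable {A}

theorem le_orderConvexHull : A ≤ A.orderConvexHull :=
  fun b hb => ⟨|b|, abs_mem_iff.mpr hb, le_rfl⟩

theorem mem_orderConvexHull_of_le {x y : K} (hy : 0 ≤ y) (hyx : y ≤ x)
    (hx : x ∈ A.orderConvexHull) : y ∈ A.orderConvexHull := by
  obtain ⟨a, ha, hxa⟩ := hx
  exact ⟨a, ha, by rw [abs_of_nonneg hy]; exact hyx.trans ((le_abs_self x).trans hxa)⟩

theorem mem_or_inv_mem_orderConvexHull (x : K) :
    x ∈ A.orderConvexHull ∨ x⁻¹ ∈ A.orderConvexHull := by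
  rcases le_total |x| 1 with hx | hx
  · exact Or.inl ⟨1, A.one_mem, hx⟩
  · exact Or.inr ⟨1, A.one_mem, by rw [abs_inv]; exact inv_le_one_of_one_le₀ hx⟩

theorem inv_mem_of_one_le_s6 (hdiv : ∀ a ∈ A, ∀ b ∈ A, 0 ≤ a → a ≤ b → ∃ c ∈ A, b * c = a ^ 2)
    {b : K} (hb : b ∈ A) (h1 : 1 ≤ b) : b⁻¹ ∈ A := by
  obtain ⟨c, hc, hbc⟩ := hdiv 1 A.one_mem b hb zero_le_one h1
  rw [one_pow] at hbc
  rwa [inv_eq_of_mul_eq_one_right hbc]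

theorem inv_mem_of_inv_mem_orderConvexHull (hinv : ∀ b ∈ A, 1 ≤ b → b⁻¹ ∈ A)
    {q : K} (hq : q ∈ A) (hq' : q⁻¹ ∈ A.orderConvexHull) : q⁻¹ ∈ A := by
  rcases eq_or_ne q 0 with rfl | hq0
  · simp
  obtain ⟨m, hm, hqm⟩ := hq'
  have h1 : 1 ≤ |q| * m := by
    calc (1 : K) = |q| * |q⁻¹| := by rw [← abs_mul, mul_inv_cancel₀ hq0, abs_one]
      _ ≤ |q| * m := mul_le_mul_of_nonneg_left hqm (abs_nonneg q)
  have hm0 : m ≠ 0 := right_ne_zero_of_mul (zero_lt_one.trans_le h1).ne'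
  have habs : |q⁻¹| = m * (|q| * m)⁻¹ := by
    rw [abs_inv, mul_inv, mul_left_comm, mul_inv_cancel₀ hm0, mul_one]
  rw [← abs_mem_iff, habs]
  exact A.mul_mem hm (hinv _ (A.mul_mem (abs_mem_iff.mpr hq) hm) h1)

theorem exists_notMem_orderConvexHull (hfrac : ∀ x : K, ∃ a ∈ A, ∃ b ∈ A, b ≠ 0 ∧ x = a / b)
    (hne : ∃ x : K, x ∉ A) (hinv : ∀ b ∈ A, 1 ≤ b → b⁻¹ ∈ A) :
    ∃ y : K, y ∉ A.orderConvexHull := by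
  by_contra! hV
  obtain ⟨x, hx⟩ := hne
  obtain ⟨p, hp, q, hq, -, rfl⟩ := hfrac x
  exact hx (div_eq_mul_inv p q ▸
    A.mul_mem hp (inv_mem_of_inv_mem_orderConvexHull hinv hq (hV q⁻¹)))

theorem isUnit_iff_exists_mul_eq_one_orderConvexHull (hinv : ∀ b ∈ A, 1 ≤ b → b⁻¹ ∈ A)
    (a : A) : IsUnit a ↔ ∃ y ∈ A.orderConvexHull, (a : K) * y = 1 := by
  constructor
  · rintro ⟨u, rfl⟩
    refine ⟨_, le_orderConvexHull (u⁻¹ : Aˣ).val.2, ?_⟩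
    exact congrArg Subtype.val u.mul_inv
  · rintro ⟨y, hy, hay⟩
    have hya : y = (a : K)⁻¹ := (inv_eq_of_mul_eq_one_right hay).symm
    have ha0 : (a : K) ≠ 0 := left_ne_zero_of_mul_eq_one hay
    subst hya
    refine isUnit_iff_exists_inv.mpr
      ⟨⟨_, inv_mem_of_inv_mem_orderConvexHull hinv a.2 hy⟩, Subtype.ext ?_⟩
    exact mul_inv_cancel₀ ha0

end Subring

theorem convexHull_valuationRing_and_maximalIdeal_general {K : Type*} [Field K] [LinearOrder K] [IsStrictOrderedRing K]
    (A : Subring K) [IsLocalRing A]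
    (hfrac : ∀ x : K, ∃ a ∈ A, ∃ b ∈ A, b ≠ 0 ∧ x = a / b)
    (hne : ∃ x : K, x ∉ A)
    (hdiv : ∀ a ∈ A, ∀ b ∈ A, 0 ≤ a → a ≤ b → ∃ c ∈ A, b * c = a ^ 2) :
    ∃ V : Subring K,
      (V : Set K) = {x : K | ∃ a ∈ A, |x| ≤ a} ∧
      (∃ y : K, y ∉ V) ∧
      (∀ x y : K, 0 ≤ y → y ≤ x → x ∈ V → y ∈ V) ∧
      (∀ x : K, x ≠ 0 → x ∈ V ∨ x⁻¹ ∈ V) ∧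
      (∀ a : A, a ∈ IsLocalRing.maximalIdeal A ↔ ¬ ∃ y ∈ V, (a : K) * y = 1) := by
  have hinv : ∀ b ∈ A, 1 ≤ b → b⁻¹ ∈ A := fun _ hb h1 => Subring.inv_mem_of_one_le_s6 hdiv hb h1
  refine ⟨A.orderConvexHull, rfl, Subring.exists_notMem_orderConvexHull hfrac hne hinv,
    fun _ _ hy hyx hx => Subring.mem_orderConvexHull_of_le hy hyx hx,
    fun x _ => Subring.mem_or_inv_mem_orderConvexHull x, fun a => ?_⟩
  rw [IsLocalRing.mem_maximalIdeal, mem_nonunits_iff,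
    Subring.isUnit_iff_exists_mul_eq_one_orderConvexHull hinv]

/-- Let `A` be a non-trivial real closed domain (a proper subring of its
ordered fraction field `K`, local, with the real closed ring divisibility and square
conditions). Then the convex hull `V` of `A` in `K` is a proper convex subring of `K`
(hence a valuation ring of `K`), and `A ∩ m_V = m_A`. -/
theorem convexHull_valuationRing_and_maximalIdeal {K : Type*} [Field K] [LinearOrder K] [IsStrictOrderedRing K]
    (A : Subring K) [IsLocalRing A]
    (hfrac : ∀ x : K, ∃ a ∈ A, ∃ b ∈ A, b ≠ 0 ∧ x = a / b)
    (hne : ∃ x : K, x ∉ A)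
    (hsq : ∀ a ∈ A, (0 : K) ≤ a → ∃ b ∈ A, b ^ 2 = a)
    (hdiv : ∀ a ∈ A, ∀ b ∈ A, 0 ≤ a → a ≤ b → ∃ c ∈ A, b * c = a ^ 2) :
    ∃ V : Subring K,
      (V : Set K) = {x : K | ∃ a ∈ A, |x| ≤ a} ∧
      (∃ y : K, y ∉ V) ∧
      (∀ x y : K, 0 ≤ y → y ≤ x → x ∈ V → y ∈ V) ∧
      (∀ x : K, x ≠ 0 → x ∈ V ∨ x⁻¹ ∈ V) ∧
      (∀ a : A, a ∈ IsLocalRing.maximalIdeal A ↔ ¬ ∃ y ∈ V, (a : K) * y = 1) :=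
  convexHull_valuationRing_and_maximalIdeal_general A hfrac hne hdiv
end

section
/- Let A be a commutative ring and q₁, q₂ prime ideals incomparable under inclusion. Suppose p₁ ⊆ q₁ and p₂ ⊆ q₂ are primes such that the up-sets of p₁ and p₂ in Spec(A) are chains, and p₁ + p₂ is a prime ideal. Then p₁ + p₂ = q₁ + q₂. -/
/-! Put `s = p₁ + p₂`. Since `s` is prime and lies above both `p₁` and `p₂`, it is comparable with
`q₁` and with `q₂`. If `s ⊆ q₁`, then `q₁` and `q₂` both lie above `p₂`, hence are comparable, which
is excluded; so `q₁ ⊆ s`, and likewise `q₂ ⊆ s`. Together with `s ⊆ q₁ + q₂` this gives equality. -/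

theorem le_of_isChain_of_incomparable {α : Type*} [Preorder α] {P : α → Prop}
    {p₁ p₂ q₁ q₂ s : α} (hc₁ : IsChain (· ≤ ·) {r | P r ∧ p₁ ≤ r})
    (hc₂ : IsChain (· ≤ ·) {r | P r ∧ p₂ ≤ r}) (hq₁ : P q₁) (hq₂ : P q₂) (hs : P s)
    (hinc : ¬ q₁ ≤ q₂ ∧ ¬ q₂ ≤ q₁) (h₁ : p₁ ≤ q₁) (h₂ : p₂ ≤ q₂) (hs₁ : p₁ ≤ s) (hs₂ : p₂ ≤ s) :
    q₁ ≤ s := by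
  refine (hc₁.total ⟨hq₁, h₁⟩ ⟨hs, hs₁⟩).resolve_right fun hsq₁ => ?_
  rcases hc₂.total ⟨hq₁, hs₂.trans hsq₁⟩ ⟨hq₂, h₂⟩ with h | h
  exacts [hinc.1 h, hinc.2 h]

theorem sum_eq_sum_of_incomparable_general {A : Type*} [CommRing A]
    (p₁ p₂ q₁ q₂ : Ideal A)
    (hq₁ : q₁.IsPrime) (hq₂ : q₂.IsPrime)
    (hinc : ¬ q₁ ≤ q₂ ∧ ¬ q₂ ≤ q₁)
    (h₁ : p₁ ≤ q₁) (h₂ : p₂ ≤ q₂)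
    (hc₁ : ∀ r s : Ideal A, r.IsPrime → s.IsPrime → p₁ ≤ r → p₁ ≤ s → r ≤ s ∨ s ≤ r)
    (hc₂ : ∀ r s : Ideal A, r.IsPrime → s.IsPrime → p₂ ≤ r → p₂ ≤ s → r ≤ s ∨ s ≤ r)
    (hsum : (p₁ + p₂).IsPrime) :
    p₁ + p₂ = q₁ + q₂ := by
  have chain₁ : IsChain (· ≤ ·) {r : Ideal A | r.IsPrime ∧ p₁ ≤ r} :=
    fun r hr s hs _ => hc₁ r s hr.1 hs.1 hr.2 hs.2
  have chain₂ : IsChain (· ≤ ·) {r : Ideal A | r.IsPrime ∧ p₂ ≤ r} :=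
    fun r hr s hs _ => hc₂ r s hr.1 hs.1 hr.2 hs.2
  simp only [Ideal.add_eq_sup] at hsum ⊢
  refine le_antisymm (sup_le_sup h₁ h₂) (sup_le ?_ ?_)
  · exact le_of_isChain_of_incomparable chain₁ chain₂ hq₁ hq₂ hsum hinc h₁ h₂
      le_sup_left le_sup_right
  · exact le_of_isChain_of_incomparable chain₂ chain₁ hq₂ hq₁ hsum hinc.symm h₂ h₁
      le_sup_right le_sup_left

/-- If `q₁, q₂` are incomparable primes, `p₁ ⊆ q₁` and `p₂ ⊆ q₂` are
primes whose up-sets in Spec(A) are chains, and `p₁ + p₂` is prime, then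
`p₁ + p₂ = q₁ + q₂`. -/
theorem sum_eq_sum_of_incomparable {A : Type*} [CommRing A]
    (p₁ p₂ q₁ q₂ : Ideal A)
    (hp₁ : p₁.IsPrime) (hp₂ : p₂.IsPrime) (hq₁ : q₁.IsPrime) (hq₂ : q₂.IsPrime)
    (hinc : ¬ q₁ ≤ q₂ ∧ ¬ q₂ ≤ q₁)
    (h₁ : p₁ ≤ q₁) (h₂ : p₂ ≤ q₂)
    (hc₁ : ∀ r s : Ideal A, r.IsPrime → s.IsPrime → p₁ ≤ r → p₁ ≤ s → r ≤ s ∨ s ≤ r)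
    (hc₂ : ∀ r s : Ideal A, r.IsPrime → s.IsPrime → p₂ ≤ r → p₂ ≤ s → r ≤ s ∨ s ≤ r)
    (hsum : (p₁ + p₂).IsPrime) :
    p₁ + p₂ = q₁ + q₂ :=
  sum_eq_sum_of_incomparable_general p₁ p₂ q₁ q₂ hq₁ hq₂ hinc h₁ h₂ hc₁ hc₂ hsum
end

section
/- Let A be a local ring whose prime spectrum is a root system under inclusion and in which the sum of two primes is prime whenever proper. If p₁, …, p_n (n ≥ 2) are pairwise incomparable prime ideals of A, then for every i there exists j ≠ i such that p₁ + ⋯ + p_n = p_i + p_j. -/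
/-!
Over a fixed prime `p i`, every sum `p i + p k` is a proper ideal (the ring is local), hence a
prime containing `p i`, and these primes form a chain. The sum of all the `p k` is the largest
of the finitely many `p i + p k` with `k ≠ i`.
-/

theorem Finset.exists_mem_eq_sup'_of_isChain {α ι : Type*} [SemilatticeSup α] {s : Finset ι}
    (hs : s.Nonempty) (f : ι → α) (hf : IsChain (· ≤ ·) (f '' s)) :
    ∃ i ∈ s, s.sup' hs f = f i := by
  have hclosed : ∀ x ∈ f '' s, ∀ y ∈ f '' s, x ⊔ y ∈ f '' s := by
    intro x hx y hy
    rcases hf.total hx hy with hxy | hyx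
    · rwa [sup_of_le_right hxy]
    · rwa [sup_of_le_left hyx]
  obtain ⟨i, hi, hsup⟩ := Finset.sup'_mem _ hclosed s hs f fun i hi => Set.mem_image_of_mem f hi
  exact ⟨i, hi, hsup.symm⟩

theorem Finset.exists_sup_eq_sup_of_isChain {α ι : Type*} [SemilatticeSup α] [OrderBot α]
    [DecidableEq ι] {s : Finset ι} {f : ι → α} {i : ι} (hi : i ∈ s) (hs : (s.erase i).Nonempty)
    (hf : IsChain (· ≤ ·) ((f i ⊔ f ·) '' (s.erase i))) :
    ∃ j ∈ s, j ≠ i ∧ s.sup f = f i ⊔ f j := by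
  obtain ⟨j, hj, hmax⟩ := Finset.exists_mem_eq_sup'_of_isChain hs _ hf
  obtain ⟨hji, hjs⟩ := Finset.mem_erase.mp hj
  refine ⟨j, hjs, hji,
    le_antisymm (Finset.sup_le fun k hk => ?_) (sup_le (le_sup hi) (le_sup hjs))⟩
  rcases eq_or_ne k i with rfl | hki
  · exact le_sup_left
  · calc f k ≤ f i ⊔ f k := le_sup_right
      _ ≤ (s.erase i).sup' hs (f i ⊔ f ·) :=
          Finset.le_sup' (f i ⊔ f ·) (Finset.mem_erase.mpr ⟨hki, hk⟩)
      _ = f i ⊔ f j := hmax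

theorem IsLocalRing.sup_ne_top {A : Type*} [CommRing A] [IsLocalRing A] {I J : Ideal A}
    (hI : I ≠ ⊤) (hJ : J ≠ ⊤) : I ⊔ J ≠ ⊤ :=
  ne_top_of_le_ne_top (maximalIdeal.isMaximal A).ne_top
    (sup_le (le_maximalIdeal hI) (le_maximalIdeal hJ))

theorem sum_primes_eq_sum_two_general {A : Type*} [CommRing A] [IsLocalRing A]
    (hroot : ∀ p q r : Ideal A, p.IsPrime → q.IsPrime → r.IsPrime →
      p ≤ q → p ≤ r → q ≤ r ∨ r ≤ q)
    (hsum : ∀ p q : Ideal A, p.IsPrime → q.IsPrime → p + q ≠ ⊤ → (p + q).IsPrime)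
    (n : ℕ) (hn : 2 ≤ n) (p : Fin n → Ideal A) (hp : ∀ i, (p i).IsPrime)
    (i : Fin n) :
    ∃ j, j ≠ i ∧ (∑ k, p k) = p i + p j := by
  have hprime (k : Fin n) : (p i ⊔ p k).IsPrime :=
    hsum _ _ (hp i) (hp k) (IsLocalRing.sup_ne_top (hp i).ne_top (hp k).ne_top)
  have hchain : IsChain (· ≤ ·) ((p i ⊔ p ·) '' ↑(Finset.univ.erase i)) := by
    rintro _ ⟨a, -, rfl⟩ _ ⟨b, -, rfl⟩ -
    exact hroot _ _ _ (hp i) (hprime a) (hprime b) le_sup_left le_sup_left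
  have hne : (Finset.univ.erase i).Nonempty := by
    rw [← Finset.card_pos, Finset.card_erase_of_mem (Finset.mem_univ i), Finset.card_univ,
      Fintype.card_fin]
    omega
  obtain ⟨j, -, hji, hj⟩ := Finset.exists_sup_eq_sup_of_isChain (Finset.mem_univ i) hne hchain
  exact ⟨j, hji, by rw [Ideal.sum_eq_sup, hj]; rfl⟩

/-- In a local ring whose prime spectrum is a root system under inclusion
and where sums of primes are prime whenever proper, for pairwise incomparable primes
`p 1, ..., p n` (n ≥ 2) and every `i` there is `j ≠ i` with `∑ k, p k = p i + p j`. -/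
theorem sum_primes_eq_sum_two {A : Type*} [CommRing A] [IsLocalRing A]
    (hroot : ∀ p q r : Ideal A, p.IsPrime → q.IsPrime → r.IsPrime →
      p ≤ q → p ≤ r → q ≤ r ∨ r ≤ q)
    (hsum : ∀ p q : Ideal A, p.IsPrime → q.IsPrime → p + q ≠ ⊤ → (p + q).IsPrime)
    (n : ℕ) (hn : 2 ≤ n) (p : Fin n → Ideal A) (hp : ∀ i, (p i).IsPrime)
    (hinc : ∀ i j, i ≠ j → ¬ p i ≤ p j)
    (i : Fin n) :
    ∃ j, j ≠ i ∧ (∑ k, p k) = p i + p j :=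
  sum_primes_eq_sum_two_general hroot hsum n hn p hp i
end

section
/- Let A be a reduced local ring with maximal ideal m and exactly n minimal prime ideals p₁, …, p_n (n ≥ 2), and assume that the spectrum of A is a root system and that sums of primes are prime when proper. Then the maximal ideal m is the sum of two distinct minimal prime ideals if and only if every non-unit of A is a sum of two zero divisors. -/
section Aux
section Aux
variable {A : Type*} [CommRing A] [IsReduced A] [DecidableEq (Ideal A)]

lemma sInf_minPrimes_bot : sInf (minimalPrimes A) = ⊥ := by
  have h := Ideal.sInf_minimalPrimes (I := (⊥ : Ideal A))
  have h2 : (⊥ : Ideal A).radical = ⊥ := by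
    have := nilradical_eq_zero A
    simpa [nilradical] using this
  rw [h2] at h
  simpa [minimalPrimes] using h

lemma zd_mem_minPrime {b b' : A} (hb' : b' ≠ 0) (h : b * b' = 0) :
    ∃ q ∈ minimalPrimes A, b ∈ q := by
  by_contra hc
  push_neg at hc
  have : b' ∈ sInf (minimalPrimes A) := by
    rw [Submodule.mem_sInf]
    intro q hq
    have hqp : Ideal.IsPrime q := hq.1.1
    have : b * b' ∈ q := by rw [h]; exact q.zero_mem
    rcases hqp.mem_or_mem this with h1 | h1
    · exact absurd h1 (hc q hq)
    · exact h1
  rw [sInf_minPrimes_bot] at this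
  exact hb' this

lemma mem_minPrime_zd {s : Finset (Ideal A)} (hs : ↑s = minimalPrimes A)
    {p : Ideal A} (hp : p ∈ minimalPrimes A) {b : A} (hb : b ∈ p) :
    ∃ y : A, y ≠ 0 ∧ b * y = 0 := by
  have hps : p ∈ s := by rw [← hs] at hp; exact_mod_cast hp
  have hpp : p.IsPrime := hp.1.1
  have : ∃ y ∈ (s.erase p).inf id, y ∉ p := by
    by_contra hc
    push_neg at hc
    have hle : (s.erase p).inf id ≤ p := hc
    obtain ⟨q, hq, hqle⟩ := hpp.inf_le'.mp hle
    have hqmin : q ∈ minimalPrimes A := by rw [← hs]; exact_mod_cast Finset.mem_of_mem_erase hq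
    have hqle' : q ≤ p := hqle
    have : p ≤ q := hp.2 ⟨hqmin.1.1, bot_le⟩ hqle'
    exact (Finset.ne_of_mem_erase hq) (le_antisymm hqle' this)
  obtain ⟨y, hy, hynp⟩ := this
  refine ⟨y, fun h0 => hynp (h0 ▸ p.zero_mem), ?_⟩
  have : b * y ∈ sInf (minimalPrimes A) := by
    rw [Submodule.mem_sInf]
    intro q hq
    have hqs : q ∈ s := by rw [← hs] at hq; exact_mod_cast hq
    by_cases hqp : q = p
    · exact Ideal.mul_mem_right y q (hqp ▸ hb)
    · exact Ideal.mul_mem_left q b (Finset.inf_le (f := id) (Finset.mem_erase.mpr ⟨hqp, hqs⟩) hy)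
  rw [sInf_minPrimes_bot] at this
  exact this

end Aux


/-- In a reduced local ring with exactly `n ≥ 2` minimal primes, whose
spectrum is a root system and where sums of primes are prime when proper, the maximal
ideal is the sum of two distinct minimal primes iff every non-unit is a sum of two
zero divisors. -/
theorem maximalIdeal_sum_of_two_minimal_primes_iff {A : Type*} [CommRing A]
    [IsLocalRing A] [IsReduced A]
    (n : ℕ) (hn : 2 ≤ n)
    (hmin : ∃ s : Finset (Ideal A), ↑s = minimalPrimes A ∧ s.card = n)
    (hroot : ∀ p q r : Ideal A, p.IsPrime → q.IsPrime → r.IsPrime →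
      p ≤ q → p ≤ r → q ≤ r ∨ r ≤ q)
    (hsum : ∀ p q : Ideal A, p.IsPrime → q.IsPrime → p + q ≠ ⊤ → (p + q).IsPrime) :
    (∃ p ∈ minimalPrimes A, ∃ q ∈ minimalPrimes A, p ≠ q ∧
        p + q = IsLocalRing.maximalIdeal A)
      ↔ (∀ a ∈ IsLocalRing.maximalIdeal A, ∃ b c : A,
          (∃ b' : A, b' ≠ 0 ∧ b * b' = 0) ∧ (∃ c' : A, c' ≠ 0 ∧ c * c' = 0) ∧
          a = b + c) := by
  classical
  obtain ⟨s, hs, hcard⟩ := hmin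
  constructor
  · rintro ⟨p, hp, q, hq, hpq, heq⟩ a ha
    rw [← heq, Submodule.add_eq_sup, Submodule.mem_sup] at ha
    obtain ⟨b, hb, c, hc, habc⟩ := ha
    obtain ⟨y, hy, hby⟩ := mem_minPrime_zd hs hp hb
    obtain ⟨z, hz, hcz⟩ := mem_minPrime_zd hs hq hc
    exact ⟨b, c, ⟨y, hy, hby⟩, ⟨z, hz, hcz⟩, habc.symm⟩
  · intro h
    -- all sums p + q for p, q ∈ s are proper (≤ maximal ideal) hence prime
    have hles : ∀ pq : Ideal A × Ideal A, pq ∈ s ×ˢ s →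
        pq.1 + pq.2 ≤ IsLocalRing.maximalIdeal A := by
      rintro ⟨p, q⟩ hpq
      rw [Finset.mem_product] at hpq
      have hp : p ∈ minimalPrimes A := by rw [← hs]; exact_mod_cast hpq.1
      have hq : q ∈ minimalPrimes A := by rw [← hs]; exact_mod_cast hpq.2
      exact sup_le (IsLocalRing.le_maximalIdeal hp.1.1.ne_top)
        (IsLocalRing.le_maximalIdeal hq.1.1.ne_top)
    have hprime : ∀ pq : Ideal A × Ideal A, pq ∈ s ×ˢ s → (pq.1 + pq.2).IsPrime := by
      rintro ⟨p, q⟩ hpq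
      rw [Finset.mem_product] at hpq
      have hp : p ∈ minimalPrimes A := by rw [← hs]; exact_mod_cast hpq.1
      have hq : q ∈ minimalPrimes A := by rw [← hs]; exact_mod_cast hpq.2
      refine hsum p q hp.1.1 hq.1.1 ?_
      intro htop
      exact (IsLocalRing.maximalIdeal.isMaximal A).ne_top
        (top_le_iff.mp (htop ▸ hles (p, q) (Finset.mem_product.mpr hpq)))
    have hsub : ((IsLocalRing.maximalIdeal A : Ideal A) : Set A) ⊆
        ⋃ pq ∈ ((s ×ˢ s : Finset (Ideal A × Ideal A)) : Set (Ideal A × Ideal A)),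
          ((pq.1 + pq.2 : Ideal A) : Set A) := by
      intro a ha
      obtain ⟨b, c, ⟨b', hb', hbb⟩, ⟨c', hc', hcc⟩, habc⟩ := h a ha
      obtain ⟨p, hpmin, hbp⟩ := zd_mem_minPrime hb' hbb
      obtain ⟨q, hqmin, hcq⟩ := zd_mem_minPrime hc' hcc
      have hps : p ∈ s := by rw [← hs] at hpmin; exact_mod_cast hpmin
      have hqs : q ∈ s := by rw [← hs] at hqmin; exact_mod_cast hqmin
      refine Set.mem_biUnion (show ((p, q) : Ideal A × Ideal A) ∈
        ((s ×ˢ s : Finset _) : Set _) from by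
          exact_mod_cast Finset.mem_product.mpr ⟨hps, hqs⟩) ?_
      show a ∈ (p + q : Ideal A)
      rw [habc]
      exact Submodule.add_mem_sup hbp hcq
    obtain ⟨⟨p, q⟩, hpqs, hle⟩ :=
      (Ideal.subset_union_prime (⊥, ⊥) (⊥, ⊥)
        (fun i hi _ _ => hprime i hi)).mp hsub
    rw [Finset.mem_product] at hpqs
    have hp : p ∈ minimalPrimes A := by rw [← hs]; exact_mod_cast hpqs.1
    have hq : q ∈ minimalPrimes A := by rw [← hs]; exact_mod_cast hpqs.2
    have heq : p + q = IsLocalRing.maximalIdeal A :=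
      le_antisymm (hles (p, q) (Finset.mem_product.mpr hpqs)) hle
    by_cases hpq : p = q
    · -- then m = p is a minimal prime; contradicts existence of a second minimal prime
      exfalso
      subst hpq
      have hm : p = IsLocalRing.maximalIdeal A := by simpa using heq
      -- s has card ≥ 2, so there is q' ≠ p in s
      have : ∃ q' ∈ s, q' ≠ p := by
        by_contra hc
        push_neg at hc
        have : s ⊆ {p} := fun x hx => Finset.mem_singleton.mpr (hc x hx)
        have := Finset.card_le_card this
        simp [hcard] at this
        omega
      obtain ⟨q', hq's, hq'p⟩ := this
      have hq' : q' ∈ minimalPrimes A := by rw [← hs]; exact_mod_cast hq's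
      have hle' : q' ≤ p := hm ▸ IsLocalRing.le_maximalIdeal hq'.1.1.ne_top
      have : p ≤ q' := hp.2 ⟨hq'.1.1, bot_le⟩ hle'
      exact hq'p (le_antisymm hle' this)
    · exact ⟨p, hp, q, hq, hpq, heq⟩
end Aux
end

section
/- Let A be a reduced local ring with exactly n minimal prime ideals (n ≥ 2). Then for any n nonzero pairwise orthogonal elements a₁, …, a_n of A (a_i a_j = 0 for i ≠ j), the minimal prime ideals of A are exactly the annihilators Ann(a₁), …, Ann(a_n). -/
/-- In a reduced local ring with exactly `n ≥ 2` minimal primes, for any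
nonzero pairwise orthogonal elements `a 1, ..., a n`, the minimal primes are exactly
the annihilators `Ann(a 1), ..., Ann(a n)`. -/
theorem minimalPrimes_eq_annihilators {A : Type*} [CommRing A] [IsLocalRing A]
    [IsReduced A]
    (n : ℕ) (hn : 2 ≤ n)
    (hmin : ∃ s : Finset (Ideal A), ↑s = minimalPrimes A ∧ s.card = n)
    (a : Fin n → A) (ha : ∀ i, a i ≠ 0)
    (horth : ∀ i j, i ≠ j → a i * a j = 0) :
    minimalPrimes A = Set.range fun i => (Ideal.span {a i}).annihilator := by
  classical
  obtain ⟨s, hs, hcard⟩ := hmin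
  -- Intersection of all minimal primes is zero (reduced ring)
  have hinf : ∀ x : A, (∀ P ∈ minimalPrimes A, x ∈ P) → x = 0 := by
    intro x hx
    have h1 : x ∈ sInf (minimalPrimes A) := Ideal.mem_sInf.mpr fun {P} hP => hx P hP
    rw [minimalPrimes, Ideal.sInf_minimalPrimes] at h1
    have h2 : IsNilpotent x := by
      obtain ⟨m, hm⟩ := Ideal.mem_radical_iff.mp h1
      exact ⟨m, by simpa using hm⟩
    exact h2.eq_zero
  -- a minimal prime misses at most one of the a i
  have atmost : ∀ P ∈ minimalPrimes A, ∀ i j, a i ∉ P → a j ∉ P → i = j := by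
    intro P hP i j hi hj
    by_contra hij
    have hprime : P.IsPrime := hP.1.1
    have h0 : a i * a j ∈ P := by rw [horth i j hij]; exact P.zero_mem
    rcases hprime.mem_or_mem h0 with h | h
    · exact hi h
    · exact hj h
  -- each a i is missed by some minimal prime
  have hex : ∀ i, ∃ P ∈ minimalPrimes A, a i ∉ P := by
    intro i
    by_contra h
    push_neg at h
    exact ha i (hinf _ h)
  choose f hf1 hf2 using hex
  have hfs : ∀ i, f i ∈ s := fun i => by
    have := hf1 i; rwa [← hs] at this
  have hinj : Function.Injective f := fun i j h =>
    atmost (f i) (hf1 i) i j (hf2 i) (h ▸ hf2 j)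
  -- f is surjective onto the minimal primes
  have himg : Finset.image f Finset.univ = s := by
    apply Finset.eq_of_subset_of_card_le
    · intro P hP
      obtain ⟨i, _, rfl⟩ := Finset.mem_image.mp hP
      exact hfs i
    · rw [Finset.card_image_of_injective _ hinj, Finset.card_univ, Fintype.card_fin, hcard]
  have hsurj : ∀ P ∈ minimalPrimes A, ∃ i, f i = P := by
    intro P hP
    have : P ∈ s := by rwa [← hs] at hP
    rw [← himg] at this
    obtain ⟨i, _, hi⟩ := Finset.mem_image.mp this
    exact ⟨i, hi⟩
  -- uniqueness: a minimal prime missing a i equals f i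
  have huniq : ∀ P ∈ minimalPrimes A, ∀ i, a i ∉ P → P = f i := by
    intro P hP i hi
    obtain ⟨j, rfl⟩ := hsurj P hP
    have : j = i := atmost (f j) (hf1 j) j i (hf2 j) hi
    rw [this]
  -- key: f i = Ann (a i)
  have hkey : ∀ i, f i = (Ideal.span {a i}).annihilator := by
    intro i
    ext b
    have hann : b ∈ (Ideal.span {a i}).annihilator ↔ b * a i = 0 :=
      (Submodule.mem_annihilator_span_singleton (a i) b).trans (by rw [smul_eq_mul])
    rw [hann]
    constructor
    · intro hb
      apply hinf
      intro Q hQ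
      by_cases hai : a i ∈ Q
      · exact Ideal.mul_mem_left Q b hai
      · rw [huniq Q hQ i hai]
        exact Ideal.mul_mem_right _ _ hb
    · intro hb
      have hprime : (f i).IsPrime := (hf1 i).1.1
      have h0 : b * a i ∈ f i := by rw [hb]; exact (f i).zero_mem
      rcases hprime.mem_or_mem h0 with h | h
      · exact h
      · exact absurd h (hf2 i)
  ext P
  constructor
  · intro hP
    obtain ⟨i, rfl⟩ := hsurj P hP
    exact ⟨i, (hkey i).symm⟩
  · rintro ⟨i, rfl⟩
    show (Ideal.span {a i}).annihilator ∈ minimalPrimes A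
    rw [← hkey i]
    exact hf1 i
end

section
/- Let K be a real closed field with convex valuation ring V and residue map λ: V → k. A subfield k₀ ⊆ V maps isomorphically onto k under λ if and only if k₀ is a maximal subfield of V. In particular every real closed valued field has a coefficient field. -/
def IsRealClosedOrdField (K : Type*) [Field K] [LinearOrder K] [IsStrictOrderedRing K] : Prop :=
  (∀ x : K, 0 ≤ x → ∃ y : K, y ^ 2 = x) ∧
  ∀ p : Polynomial K, Odd p.natDegree → ∃ x : K, p.IsRoot x

/-!
A subfield `k₀ ⊆ V` that is maximal is algebraically closed in `K`: an element algebraic over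
`k₀` is integral over the valuation ring `V`, hence lies in `V` together with `k₀[ξ]`. So `k₀` is
real closed. A residue class transcendental over `λ(k₀)` would lift to some `ξ ∈ V` at which every
nonzero polynomial over `k₀` takes a unit value, so again `k₀(ξ) ⊆ V`. Hence the residue field
`k` is algebraic over `λ(k₀) ≅ k₀`. By Artin–Schreier every irreducible polynomial over a real
closed field has degree at most `2` (the splitting field of `(X ^ 2 + 1) Q` has `2`-power degree,
and has no quadratic extension of `F(i)` inside it, as every element of `F(i)` is a square); since
`-1` is not a square in `k`, this forces `k = λ(k₀)`. Conversely the residue map is injective on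
every subfield, so a subfield mapping onto `k` admits no proper extension inside `V`. Zorn's lemma,
starting from `ℚ ⊆ V`, provides a maximal subfield.
-/

open Polynomial IntermediateField Module

section FieldExtensions

variable {F L : Type*} [Field F] [Field L] [Algebra F L]

theorem exists_sq_eq_algebraMap_of_natDegree_minpoly_eq_two [NeZero (2 : F)] {z : L}
    (hz : (minpoly F z).natDegree = 2) :
    ∃ w ∉ Set.range (algebraMap F L), ∃ d : F, w ^ 2 = algebraMap F L d := by
  set b := (minpoly F z).coeff 1
  set c := (minpoly F z).coeff 0
  have hint : IsIntegral F z := by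
    by_contra h
    simp [minpoly.eq_zero h] at hz
  have hrel : z ^ 2 + algebraMap F L b * z + algebraMap F L c = 0 := by
    have h := minpoly.aeval F z
    have h2 : (minpoly F z).coeff 2 = 1 := hz ▸ (minpoly.monic hint).coeff_natDegree
    rw [aeval_eq_sum_range, hz, Finset.sum_range_succ, Finset.sum_range_succ,
      Finset.sum_range_one, h2, one_smul, Algebra.smul_def, Algebra.smul_def] at h
    linear_combination h
  refine ⟨z + algebraMap F L (b / 2), ?_, (b / 2) ^ 2 - c, ?_⟩
  · rintro ⟨y, hy⟩
    have : (minpoly F z).natDegree = 1 :=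
      minpoly.natDegree_eq_one_iff.mpr ⟨y - b / 2, by rw [map_sub, hy, add_sub_cancel_right]⟩
    omega
  · have h2 : algebraMap F L (b / 2) * 2 = algebraMap F L b := by
      rw [← map_ofNat (algebraMap F L), ← map_mul, div_mul_cancel₀ b two_ne_zero]
    rw [map_sub, map_pow]
    linear_combination hrel + z * h2

theorem finrank_ne_two_of_forall_isSquare [NeZero (2 : F)] (hsq : ∀ a : F, IsSquare a) :
    finrank F L ≠ 2 := by
  intro h2
  have : FiniteDimensional F L := Module.finite_of_finrank_eq_succ h2
  obtain ⟨z, hz⟩ : ∃ z : L, z ∉ Set.range (algebraMap F L) := by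
    by_contra! h
    have : (⊥ : Subalgebra F L) = ⊤ := eq_top_iff.mpr fun x _ ↦ Algebra.mem_bot.mpr (h x)
    rw [Subalgebra.bot_eq_top_iff_finrank_eq_one] at this
    omega
  have hdeg : (minpoly F z).natDegree = 2 := by
    have := minpoly.natDegree_le (A := F) z
    have := minpoly.natDegree_pos (IsIntegral.of_finite F z)
    have : (minpoly F z).natDegree ≠ 1 := fun h ↦ hz (minpoly.natDegree_eq_one_iff.mp h)
    omega
  obtain ⟨w, hw, d, hwd⟩ := exists_sq_eq_algebraMap_of_natDegree_minpoly_eq_two hdeg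
  obtain ⟨e, rfl⟩ := hsq d
  rw [map_mul, ← sq, sq_eq_sq_iff_eq_or_eq_neg] at hwd
  rcases hwd with h | h
  · exact hw ⟨e, h.symm⟩
  · exact hw ⟨-e, by rw [map_neg, h]⟩

theorem IsGalois.finrank_eq_one_of_forall_isSquare [FiniteDimensional F L] [IsGalois F L]
    [NeZero (2 : F)] (hsq : ∀ a : F, IsSquare a) {n : ℕ} (hn : finrank F L = 2 ^ n) :
    finrank F L = 1 := by
  obtain _ | m := n
  · simpa using hn
  obtain ⟨H, hH⟩ := Sylow.exists_subgroup_card_pow_prime (G := Gal(L/F)) 2 (n := m)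
    (by rw [IsGalois.card_aut_eq_finrank, hn]; exact pow_dvd_pow 2 m.le_succ)
  have htower := finrank_mul_finrank F (fixedField H) L
  rw [finrank_fixedField_eq_card, hH, hn, pow_succ, mul_comm] at htower
  exact (finrank_ne_two_of_forall_isSquare hsq
    (Nat.eq_of_mul_eq_mul_left (by positivity) htower)).elim

theorem finrank_eq_one_of_odd_finrank [FiniteDimensional F L] [Algebra.IsSeparable F L]
    (hroot : ∀ p : F[X], Odd p.natDegree → ∃ x, p.IsRoot x) (hodd : Odd (finrank F L)) :
    finrank F L = 1 := by
  obtain ⟨α, hα⟩ := Field.exists_primitive_element F L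
  have hint := IsIntegral.of_finite F α
  have hdeg : finrank F L = (minpoly F α).natDegree := by
    rw [← adjoin.finrank hint, hα, finrank_top']
  obtain ⟨x, hx⟩ := hroot _ (hdeg ▸ hodd)
  rw [hdeg]
  exact natDegree_eq_of_degree_eq_some
    (degree_eq_one_of_irreducible_of_root (minpoly.irreducible hint) hx)

theorem IsGalois.exists_finrank_eq_two_pow [FiniteDimensional F L] [IsGalois F L]
    (hroot : ∀ p : F[X], Odd p.natDegree → ∃ x, p.IsRoot x) :
    ∃ n, finrank F L = 2 ^ n := by
  let P : Sylow 2 Gal(L/F) := default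
  have hidx : finrank F (fixedField P.toSubgroup) = P.index := by
    rw [IntermediateField.finrank_eq_fixingSubgroup_index, fixingSubgroup_fixedField]
  have h1 : finrank F (fixedField P.toSubgroup) = 1 :=
    finrank_eq_one_of_odd_finrank hroot
      (hidx ▸ Nat.odd_iff.mpr (Nat.two_dvd_ne_zero.mp P.not_dvd_index))
  refine ⟨(Nat.card Gal(L/F)).factorization 2, ?_⟩
  rw [← IsGalois.card_aut_eq_finrank, ← P.card_eq_multiplicity, ← P.index_mul_card, ← hidx, h1,
    one_mul]

theorem exists_eq_algebraMap_add_algebraMap_mul {i : L} (hi : i ^ 2 = -1) {z : L}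
    (hz : z ∈ F⟮i⟯) : ∃ α β : F, z = algebraMap F L α + algebraMap F L β * i := by
  have hint : IsIntegral F i := ⟨X ^ 2 + 1, monic_X_pow_add_C 1 two_ne_zero, by simp [hi]⟩
  rw [← mem_toSubalgebra, adjoin_simple_toSubalgebra_of_isAlgebraic hint.isAlgebraic] at hz
  induction hz using Algebra.adjoin_induction with
  | mem x hx => exact ⟨0, 1, by rw [Set.mem_singleton_iff.mp hx]; simp⟩
  | algebraMap r => exact ⟨r, 0, by simp⟩
  | add x y _ _ hx hy =>
    obtain ⟨⟨a, b, rfl⟩, ⟨c, d, rfl⟩⟩ := And.intro hx hy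
    exact ⟨a + c, b + d, by simp only [map_add]; ring⟩
  | mul x y _ _ hx hy =>
    obtain ⟨⟨a, b, rfl⟩, ⟨c, d, rfl⟩⟩ := And.intro hx hy
    refine ⟨a * c - b * d, a * d + b * c, ?_⟩
    simp only [map_add, map_sub, map_mul]
    linear_combination (algebraMap F L b * algebraMap F L d) * hi

end FieldExtensions

theorem IsSumSq.map {R S : Type*} [NonAssocSemiring R] [NonAssocSemiring S] (f : R →+* S) {s : R}
    (hs : IsSumSq s) : IsSumSq (f s) := by
  induction hs with
  | zero => simp
  | sq_add a _ ih => simpa using IsSumSq.sq_add (f a) ih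

namespace IsRealClosed

variable {F : Type*} [Field F] [IsRealClosed F]

theorem isSquare_sq_add_sq (a b : F) : IsSquare (a ^ 2 + b ^ 2) := by
  rcases isSquare_or_isSquare_neg (a ^ 2 + b ^ 2) with h | ⟨c, hc⟩
  · exact h
  by_cases hc0 : c = 0
  · exact ⟨0, by linear_combination -hc - c * hc0⟩
  refine absurd ?_ (IsSemireal.not_isSumSq_neg_one F)
  have : -1 = a / c * (a / c) + (b / c * (b / c) + 0) := by
    field_simp
    linear_combination hc
  rw [this]
  exact .sq_add _ (.sq_add _ .zero)

theorem exists_sq_sub_sq_eq_and_two_mul_eq (α β : F) :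
    ∃ x y : F, x ^ 2 - y ^ 2 = α ∧ 2 * x * y = β := by
  by_cases hβ : β = 0
  · rcases isSquare_or_isSquare_neg α with ⟨x, hx⟩ | ⟨y, hy⟩
    · exact ⟨x, 0, by rw [hx]; ring, by rw [hβ]; ring⟩
    · exact ⟨0, y, by linear_combination hy, by rw [hβ]; ring⟩
  obtain ⟨r, hr⟩ := isSquare_sq_add_sq α β
  have hprod : (α + r) * (α - r) = -β ^ 2 := by linear_combination hr
  -- the product of `(α + r) / 2` and `(α - r) / 2` is `-(β / 2) ^ 2`, so one of them is a square
  obtain ⟨ρ, x, hρ, hx, hαρ⟩ : ∃ ρ x : F, ρ * ρ = α ^ 2 + β ^ 2 ∧ (α + ρ) / 2 = x * x ∧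
      α + ρ ≠ 0 := by
    have hne : α + r ≠ 0 ∧ α - r ≠ 0 := by
      rw [← not_or, ← mul_eq_zero, hprod, neg_eq_zero]; exact pow_ne_zero 2 hβ
    rcases isSquare_or_isSquare_neg ((α + r) / 2) with ⟨x, hx⟩ | ⟨u, hu⟩
    · exact ⟨r, x, hr.symm, hx, hne.1⟩
    have hu0 : u ≠ 0 := by rintro rfl; apply hne.1; linear_combination -2 * hu
    refine ⟨-r, β / (2 * u), by linear_combination hr.symm, ?_,
      by rw [← sub_eq_add_neg]; exact hne.2⟩
    field_simp
    linear_combination -hprod - 2 * (α - r) * hu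
  have hx0 : x ≠ 0 := by rintro rfl; apply hαρ; linear_combination 2 * hx
  have hβx : β ^ 2 = (ρ - α) * (2 * x ^ 2) := by linear_combination 2 * (ρ - α) * hx - hρ
  refine ⟨x, β / (2 * x), ?_, by field_simp⟩
  rw [div_pow, hβx]
  field_simp
  linear_combination -2 * hx

theorem isSquare_of_mem_adjoin {N : Type*} [Field N] [Algebra F N] {i : N} (hi : i ^ 2 = -1)
    (z : F⟮i⟯) : IsSquare z := by
  obtain ⟨α, β, hz⟩ := exists_eq_algebraMap_add_algebraMap_mul hi z.2
  obtain ⟨x, y, hxy, hxy'⟩ := exists_sq_sub_sq_eq_and_two_mul_eq α β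
  have hw : algebraMap F N x + algebraMap F N y * i ∈ F⟮i⟯ :=
    add_mem (F⟮i⟯.algebraMap_mem x) (mul_mem (F⟮i⟯.algebraMap_mem y) (mem_adjoin_simple_self F i))
  refine ⟨⟨_, hw⟩, Subtype.ext ?_⟩
  rw [MulMemClass.coe_mul, hz, ← hxy, ← hxy']
  simp only [map_sub, map_mul, map_pow, map_ofNat]
  linear_combination (-(algebraMap F N y) ^ 2) * hi

theorem natDegree_le_two_of_irreducible {Q : F[X]} (hQ : Irreducible Q) : Q.natDegree ≤ 2 := by
  have hXm : (X ^ 2 + 1 : F[X]).Monic := monic_X_pow_add_C 1 two_ne_zero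
  have hX : (X ^ 2 + 1 : F[X]).natDegree = 2 := by
    rw [← C_1, natDegree_X_pow_add_C]
  let f := (X ^ 2 + 1) * Q
  let N := f.SplittingField
  have : IsGalois F N := ⟨⟩
  have hroot {p : F[X]} (hp : p ∣ f) (hp0 : p.degree ≠ 0) : ∃ r : N, aeval r p = 0 := by
    have hf0 : f ≠ 0 := mul_ne_zero hXm.ne_zero hQ.ne_zero
    obtain ⟨r, hr⟩ := ((SplittingField.splits f).of_dvd (map_ne_zero hf0) (map_dvd _ hp)
      ).exists_eval_eq_zero (by rwa [degree_map])
    exact ⟨r, by rwa [eval_map_algebraMap] at hr⟩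
  obtain ⟨i, hi⟩ : ∃ i : N, i ^ 2 = -1 := by
    obtain ⟨i, hi⟩ := hroot (dvd_mul_right _ Q)
      (by rw [degree_eq_natDegree hXm.ne_zero, hX]; decide)
    exact ⟨i, by simpa [add_eq_zero_iff_eq_neg] using hi⟩
  obtain ⟨r, hr⟩ := hroot (dvd_mul_left Q _) (degree_pos_of_irreducible hQ).ne'
  obtain ⟨n, hn⟩ := IsGalois.exists_finrank_eq_two_pow (F := F) (L := N)
    fun p hp ↦ exists_isRoot_of_odd_natDegree hp
  have hiN : finrank F⟮i⟯ N = 1 := by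
    obtain ⟨m, -, hm⟩ := (Nat.dvd_prime_pow Nat.prime_two).mp
      (hn ▸ Dvd.intro_left _ (finrank_mul_finrank F F⟮i⟯ N))
    exact IsGalois.finrank_eq_one_of_forall_isSquare (isSquare_of_mem_adjoin hi) hm
  have hN : finrank F N ≤ 2 := by
    have hint : IsIntegral F i := ⟨X ^ 2 + 1, hXm, by simp [hi]⟩
    rw [← finrank_mul_finrank F F⟮i⟯ N, hiN, mul_one, adjoin.finrank hint, ← hX]
    exact natDegree_le_of_dvd (minpoly.dvd F i (by simp [hi])) hXm.ne_zero
  calc Q.natDegree = (minpoly F r).natDegree := by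
        rw [← minpoly.eq_of_irreducible hQ hr,
          natDegree_mul_C (inv_ne_zero (leadingCoeff_ne_zero.mpr hQ.ne_zero))]
    _ ≤ finrank F N := minpoly.natDegree_le r
    _ ≤ 2 := hN

theorem mem_range_algebraMap_of_isAlgebraic {L : Type*} [Field L] [Algebra F L]
    (hL : ¬IsSquare (-1 : L)) {c : L} (hc : IsAlgebraic F c) :
    c ∈ (algebraMap F L).range := by
  have hint := hc.isIntegral
  refine minpoly.natDegree_eq_one_iff.mp ?_
  by_contra hne
  have h2 : (minpoly F c).natDegree = 2 := by
    have := natDegree_le_two_of_irreducible (minpoly.irreducible hint)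
    have := minpoly.natDegree_pos hint
    omega
  obtain ⟨w, hw, d, hwd⟩ := exists_sq_eq_algebraMap_of_natDegree_minpoly_eq_two h2
  rcases isSquare_or_isSquare_neg d with ⟨e, rfl⟩ | ⟨e, he⟩
  · rw [map_mul, ← sq, sq_eq_sq_iff_eq_or_eq_neg] at hwd
    rcases hwd with h | h
    · exact hw ⟨e, h.symm⟩
    · exact hw ⟨-e, by rw [map_neg, h]⟩
  · have he0 : algebraMap F L e ≠ 0 := by
      rintro h0
      refine hw ⟨0, ?_⟩
      rw [map_zero, eq_comm, ← pow_eq_zero_iff two_ne_zero, hwd, ← neg_neg d, he]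
      simp [map_mul, h0]
    refine hL ⟨w / algebraMap F L e, ?_⟩
    rw [← sq, div_pow, hwd, ← neg_neg d, he]
    field_simp
    simp [map_mul, sq]

theorem of_forall_isAlgebraic_mem {K : Type*} [Field K] [IsRealClosed K]
    (E : Subfield K) (hE : ∀ x : K, IsAlgebraic E x → x ∈ E) : IsRealClosed E := by
  have hsq (x : E) : IsSquare (x : K) → IsSquare x := by
    rintro ⟨r, hr⟩
    have hrE : r ∈ E :=
      hE r ⟨X ^ 2 - C x, X_pow_sub_C_ne_zero two_pos _, by simp [sq, ← hr]; exact sub_self _⟩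
    exact ⟨⟨r, hrE⟩, Subtype.ext hr⟩
  have : IsSemireal E := ⟨fun hs h ↦
    IsSemireal.one_add_ne_zero (hs.map E.subtype) (by simpa using congr_arg E.subtype h)⟩
  refine ⟨fun x ↦ ?_, fun {f} hf ↦ ?_⟩
  · exact (isSquare_or_isSquare_neg (x : K)).imp (hsq x) (hsq (-x))
  · have hf0 : f ≠ 0 := by rintro rfl; simp at hf
    obtain ⟨ξ, hξ⟩ := exists_isRoot_of_odd_natDegree
      (f := f.map (algebraMap E K)) (by rwa [natDegree_map])
    have hξE : ξ ∈ E := hE ξ ⟨f, hf0, by rwa [aeval_def, eval₂_eq_eval_map]⟩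
    refine ⟨⟨ξ, hξE⟩, (algebraMap E K).injective ?_⟩
    rw [map_zero, ← hξ.eq_zero, eval_map_algebraMap]
    exact (aeval_algebraMap_apply_eq_algebraMap_eval (⟨ξ, hξE⟩ : E) f).symm

end IsRealClosed

def Subring.IsSubfield {R : Type*} [Ring R] (S : Subring R) : Prop :=
  ∀ x ∈ S, x ≠ 0 → ∃ y ∈ S, x * y = 1

namespace Subring.IsSubfield

variable {R : Type*} [Ring R] {S T : Subring R}

theorem injOn (hS : S.IsSubfield) {L : Type*} [Ring L] [Nontrivial L] (f : R →+* L) :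
    Set.InjOn f S := by
  intro x hx y hy hxy
  by_contra hne
  obtain ⟨z, -, hz⟩ := hS (x - y) (sub_mem hx hy) (sub_ne_zero.mpr hne)
  simpa [hxy] using congr_arg f hz

theorem maximal_of_surjOn (hS : S.IsSubfield) {L : Type*} [Ring L] [Nontrivial L] (f : R →+* L)
    (hf : Set.SurjOn f S Set.univ) : Maximal IsSubfield S := by
  refine ⟨hS, fun T hT hST x hx ↦ ?_⟩
  obtain ⟨y, hy, hyx⟩ := hf (Set.mem_univ (f x))
  rwa [← hT.injOn f (hST hy) hx hyx]

theorem exists_le_maximal (hS : S.IsSubfield) : ∃ M, S ≤ M ∧ Maximal IsSubfield M := by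
  refine zorn_le_nonempty₀ {T : Subring R | T.IsSubfield} (fun c hc hchain T hT ↦ ?_) S hS
  have : Nonempty c := ⟨⟨T, hT⟩⟩
  refine ⟨⨆ T : c, T.1, fun x hx hx0 ↦ ?_, fun T hT ↦ le_iSup (fun T : c ↦ T.1) ⟨T, hT⟩⟩
  rw [← SetLike.mem_coe, coe_iSup_of_directed hchain.directed, Set.mem_iUnion] at hx
  obtain ⟨T, hxT⟩ := hx
  obtain ⟨y, hyT, hxy⟩ := hc T.2 x hxT hx0
  exact ⟨y, le_iSup (fun T : c ↦ T.1) T hyT, hxy⟩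

end Subring.IsSubfield

section SubfieldsOfSubring

variable {K : Type*} [Field K] {V : Subring K}

theorem Subring.isUnit_iff_inv_mem {x : V} (hx : x ≠ 0) : IsUnit x ↔ (x : K)⁻¹ ∈ V := by
  have hx' : (x : K) ≠ 0 := by exact_mod_cast hx
  refine ⟨fun ⟨u, hu⟩ ↦ ?_, fun h ↦ isUnit_iff_exists.mpr ⟨⟨_, h⟩, ?_, ?_⟩⟩
  · have h : (u : K) * ((u⁻¹ : Vˣ) : V) = 1 := by exact_mod_cast congrArg Subtype.val u.mul_inv
    rw [← hu, inv_eq_of_mul_eq_one_right h]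
    exact ((u⁻¹ : Vˣ) : V).2
  all_goals ext; simp [hx']

theorem Subfield.isSubfield_comap_subtype (L : Subfield K) (hLV : (L : Set K) ⊆ V) :
    (L.toSubring.comap V.subtype).IsSubfield := by
  intro x hx hx0
  have hx0' : (x : K) ≠ 0 := by exact_mod_cast hx0
  exact ⟨⟨_, hLV (L.inv_mem hx)⟩, L.inv_mem hx, Subtype.ext (mul_inv_cancel₀ hx0')⟩

def Subring.IsSubfield.toSubfield {k₀ : Subring V} (hk₀ : k₀.IsSubfield) : Subfield K :=
  { k₀.map V.subtype with
    inv_mem' := by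
      rintro _ ⟨v, hv, rfl⟩
      obtain rfl | hv0 := eq_or_ne v 0
      · simp
      obtain ⟨y, hy, hvy⟩ := hk₀ v hv hv0
      exact ⟨y, hy, eq_inv_of_mul_eq_one_right (by simpa using congr_arg V.subtype hvy)⟩ }

theorem Subring.IsSubfield.mem_toSubfield {k₀ : Subring V} (hk₀ : k₀.IsSubfield) {z : K} :
    z ∈ hk₀.toSubfield ↔ ∃ v ∈ k₀, (v : K) = z :=
  Subring.mem_map

theorem Subring.IsSubfield.toSubfield_subset {k₀ : Subring V} (hk₀ : k₀.IsSubfield) :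
    (hk₀.toSubfield : Set K) ⊆ V := by
  rintro _ ⟨v, -, rfl⟩
  exact v.2

theorem Subring.IsSubfield.mem_of_adjoin_subset {k₀ : Subring V} (hk₀ : Maximal IsSubfield k₀)
    {ξ : K} (hξ : (hk₀.prop.toSubfield⟮ξ⟯ : Set K) ⊆ V) : ξ ∈ hk₀.prop.toSubfield := by
  set E := hk₀.prop.toSubfield
  have hle : k₀ ≤ E⟮ξ⟯.toSubfield.toSubring.comap V.subtype := fun v hv ↦
    show (v : K) ∈ E⟮ξ⟯ from E⟮ξ⟯.algebraMap_mem ⟨v, hk₀.prop.mem_toSubfield.mpr ⟨v, hv, rfl⟩⟩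
  have hξk₀ := hk₀.2 (E⟮ξ⟯.toSubfield.isSubfield_comap_subtype hξ) hle
    (show (⟨ξ, hξ (mem_adjoin_simple_self E ξ)⟩ : V) ∈ _ from mem_adjoin_simple_self E ξ)
  exact hk₀.prop.mem_toSubfield.mpr ⟨_, hξk₀, rfl⟩

theorem Subfield.algebra_adjoin_subset {E : Subfield K} (hEV : (E : Set K) ⊆ V) {ξ : K}
    (hξ : ξ ∈ V) : (Algebra.adjoin E {ξ} : Set K) ⊆ V := by
  intro z hz
  induction hz using Algebra.adjoin_induction with
  | mem x hx => rwa [Set.mem_singleton_iff.mp hx]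
  | algebraMap r => exact hEV r.2
  | add x y _ _ hx hy => exact add_mem hx hy
  | mul x y _ _ hx hy => exact mul_mem hx hy

theorem Subfield.adjoin_subset_of_isAlgebraic {E : Subfield K} (hEV : (E : Set K) ⊆ V)
    {ξ : K} (hξ : ξ ∈ V) (halg : IsAlgebraic E ξ) : (E⟮ξ⟯ : Set K) ⊆ V := by
  rw [← coe_toSubalgebra, adjoin_simple_toSubalgebra_of_isAlgebraic halg]
  exact algebra_adjoin_subset hEV hξ

theorem Subfield.adjoin_subset_of_inv_aeval_mem {E : Subfield K} (hEV : (E : Set K) ⊆ V)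
    {ξ : K} (hξ : ξ ∈ V) (hinv : ∀ p : E[X], p ≠ 0 → (aeval ξ p)⁻¹ ∈ V) :
    (E⟮ξ⟯ : Set K) ⊆ V := by
  intro z hz
  obtain ⟨p, q, rfl⟩ := (mem_adjoin_simple_iff E z).mp hz
  obtain rfl | hq := eq_or_ne q 0
  · simp
  rw [div_eq_mul_inv]
  exact mul_mem (algebra_adjoin_subset hEV hξ (aeval_mem_adjoin_singleton E ξ)) (hinv q hq)

theorem Subfield.isIntegral_of_subset {E : Subfield K} (hEV : (E : Set K) ⊆ V) {ξ : K}
    (hξ : IsIntegral E ξ) : IsIntegral V ξ := by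
  obtain ⟨p, hpm, hp⟩ := hξ
  exact ⟨p.map (E.subtype.codRestrict V fun x ↦ hEV x.2), hpm.map _, by rwa [eval₂_map]⟩

theorem Subring.mem_of_isIntegral_s14 (hval : ∀ x : K, x ≠ 0 → x ∈ V ∨ x⁻¹ ∈ V) {x : K}
    (hx : IsIntegral V x) : x ∈ V := by
  let A : ValuationSubring K := { V with
    mem_or_inv_mem' := fun x ↦ (eq_or_ne x 0).elim (fun h ↦ .inl (h ▸ V.zero_mem)) (hval x) }
  obtain ⟨y, rfl⟩ := (IsIntegrallyClosed.isIntegral_iff (R := A) (K := K)).mp hx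
  exact y.2

end SubfieldsOfSubring

section ConvexSubring

variable {K : Type*} [Field K] [LinearOrder K] [IsStrictOrderedRing K] {V : Subring K}

theorem Subring.ordConnected_of_convex (hconv : ∀ a b : K, 0 ≤ b → b ≤ a → a ∈ V → b ∈ V) :
    (V : Set K).OrdConnected := by
  refine ⟨fun x hx y hy z hz ↦ ?_⟩
  have := hconv (y - x) (z - x) (sub_nonneg.mpr hz.1) (by linarith [hz.2]) (sub_mem hy hx)
  simpa using add_mem this hx

variable [(V : Set K).OrdConnected]

theorem Subring.mem_of_abs_le {x a : K} (h : |x| ≤ a) (ha : a ∈ V) : x ∈ V :=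
  Set.OrdConnected.out ‹_› (neg_mem ha) ha ⟨neg_le_of_abs_le h, le_of_abs_le h⟩

theorem Subring.ratCast_mem_of_ordConnected (q : ℚ) : (q : K) ∈ V :=
  mem_of_abs_le (a := ⌈|q|⌉₊) (by exact_mod_cast Nat.le_ceil |q|) (natCast_mem V _)

theorem Subring.abs_lt_one_of_not_isUnit {x : V} (hx : ¬IsUnit x) : |(x : K)| < 1 := by
  by_contra! h
  have hx0 : x ≠ 0 := by rintro rfl; norm_num at h
  exact hx ((isUnit_iff_inv_mem hx0).mpr
    (mem_of_abs_le (by rw [abs_inv]; exact inv_le_one_of_one_le₀ h) V.one_mem))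

theorem Subring.not_isSquare_neg_one_of_surjective {k : Type*} [Field k] (lam : V →+* k)
    (hsurj : Function.Surjective lam) : ¬IsSquare (-1 : k) := by
  rintro ⟨u, hu⟩
  obtain ⟨w, rfl⟩ := hsurj u
  have hnu : ¬IsUnit (1 + w * w) := fun h ↦
    (h.map lam).ne_zero (by rw [map_add, map_one, map_mul, ← hu, add_neg_cancel])
  have := abs_lt_one_of_not_isUnit hnu
  have hw := mul_self_nonneg (w : K)
  push_cast at this
  rw [abs_of_nonneg (by linarith)] at this
  linarith

theorem Subring.IsSubfield.surjOn_of_maximal [IsRealClosed K]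
    (hval : ∀ x : K, x ≠ 0 → x ∈ V ∨ x⁻¹ ∈ V) {k : Type*} [Field k] (lam : V →+* k)
    (hsurj : Function.Surjective lam) (hker : ∀ x : V, ¬IsUnit x → lam x = 0)
    {k₀ : Subring V} (hk₀ : Maximal IsSubfield k₀) : Set.SurjOn lam k₀ Set.univ := by
  set E := hk₀.prop.toSubfield
  have hEV : (E : Set K) ⊆ V := hk₀.prop.toSubfield_subset
  have hEmax (ξ : K) : (E⟮ξ⟯ : Set K) ⊆ V → ξ ∈ E := Subring.IsSubfield.mem_of_adjoin_subset hk₀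
  have hEalg (ξ : K) (halg : IsAlgebraic E ξ) : ξ ∈ E := hEmax ξ <|
    E.adjoin_subset_of_isAlgebraic hEV
      (mem_of_isIntegral_s14 hval (E.isIntegral_of_subset hEV halg.isIntegral)) halg
  have : IsRealClosed E := .of_forall_isAlgebraic_mem E hEalg
  let ι : E →+* V := E.subtype.codRestrict V fun x ↦ hEV x.2
  let _ : Algebra E k := (lam.comp ι).toAlgebra
  intro c _
  obtain ⟨w, rfl⟩ := hsurj c
  have halg : IsAlgebraic E (lam w) := by
    by_contra htr
    refine htr (isAlgebraic_algebraMap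
      (⟨w, hEmax w (E.adjoin_subset_of_inv_aeval_mem hEV w.2 fun p hp ↦ ?_)⟩ : E))
    have hres : lam (eval₂ ι w p) ≠ 0 := fun h ↦ htr ⟨p, hp, (hom_eval₂ p ι lam w).symm.trans h⟩
    have hunit : IsUnit (eval₂ ι w p) := not_not.mp (mt (hker _) hres)
    have hcoe : ((eval₂ ι w p : V) : K) = aeval (w : K) p := hom_eval₂ p ι V.subtype w
    exact hcoe ▸ (isUnit_iff_inv_mem hunit.ne_zero).mp hunit
  obtain ⟨x, hx⟩ := IsRealClosed.mem_range_algebraMap_of_isAlgebraic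
    (not_isSquare_neg_one_of_surjective lam hsurj) halg
  obtain ⟨v, hv, hvx⟩ := hk₀.prop.mem_toSubfield.mp x.2
  exact ⟨v, hv, hx ▸ congr_arg lam (Subtype.ext hvx)⟩

end ConvexSubring

/-- Let `K` be a real closed field with convex valuation ring `V` and
surjective residue map `lam : V → k` with kernel the non-units. A subfield `k₀ ⊆ V`
maps isomorphically onto `k` under `lam` iff `k₀` is a maximal subfield of `V`; in
particular a coefficient field exists. -/
theorem coefficientField_iff_maximal_subfield {K : Type*} [Field K] [LinearOrder K] [IsStrictOrderedRing K]
    (hK : IsRealClosedOrdField K) (V : Subring K)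
    (hval : ∀ x : K, x ≠ 0 → x ∈ V ∨ x⁻¹ ∈ V)
    (hconv : ∀ a b : K, 0 ≤ b → b ≤ a → a ∈ V → b ∈ V)
    {k : Type*} [Field k] (lam : V →+* k) (hsurj : Function.Surjective lam)
    (hker : ∀ x : V, lam x = 0 ↔ ¬ IsUnit x) :
    (∀ k₀ : Subring V, (∀ x ∈ k₀, x ≠ 0 → ∃ y ∈ k₀, x * y = 1) →
      (Set.BijOn lam (k₀ : Set V) Set.univ ↔
        ∀ k₁ : Subring V, (∀ x ∈ k₁, x ≠ 0 → ∃ y ∈ k₁, x * y = 1) →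
          k₀ ≤ k₁ → k₁ = k₀))
    ∧ ∃ k₀ : Subring V, (∀ x ∈ k₀, x ≠ 0 → ∃ y ∈ k₀, x * y = 1) ∧
        Set.BijOn lam (k₀ : Set V) Set.univ := by
  have : IsRealClosed K :=
    .of_linearOrderedField (fun hx ↦ (hK.1 _ hx).imp fun y hy ↦ by rw [← hy, sq]) (hK.2 _)
  have : (V : Set K).OrdConnected := V.ordConnected_of_convex hconv
  have hbij (k₀ : Subring V) (hk₀ : k₀.IsSubfield) :
      Set.BijOn lam k₀ Set.univ ↔ Maximal Subring.IsSubfield k₀ :=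
    ⟨fun h ↦ hk₀.maximal_of_surjOn lam h.surjOn, fun h ↦ ⟨Set.mapsTo_univ _ _, hk₀.injOn lam,
      Subring.IsSubfield.surjOn_of_maximal hval lam hsurj (fun x ↦ (hker x).mpr) h⟩⟩
  refine ⟨fun k₀ hk₀ ↦ (hbij k₀ hk₀).trans ⟨fun h k₁ hk₁ hle ↦ h.eq_of_ge hk₁ hle,
    fun h ↦ ⟨hk₀, fun k₁ hk₁ hle ↦ (h k₁ hk₁ hle).le⟩⟩, ?_⟩
  have hℚ := (Rat.castHom K).fieldRange.isSubfield_comap_subtype (V := V) fun _ ⟨q, hq⟩ ↦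
    hq ▸ V.ratCast_mem_of_ordConnected q
  obtain ⟨m, -, hm⟩ := hℚ.exists_le_maximal
  exact ⟨m, hm.prop, (hbij m hm.prop).mpr hm⟩
end

section
/- Let K be an ordered valued field with value group Γ and residue field k, let G ⊆ K^{>0} be a monomial group (v restricts to an isomorphism G ≅ Γ), and let ε: K → k((Γ)) be an embedding of valued fields into the Hahn series field such that ε(g) = x^{v(g)} for all g ∈ G. Then ε is order-preserving, where k((Γ)) carries the order with a > 0 iff the leading coefficient of a is positive. -/
/-!
Given `x > 0`, choose the monomial `g ∈ G` with `v g = v x`. Then `y = x / g` is a positive unit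
of the valuation ring, so `ε y` has order `0` and its constant term is the residue of `y`, which
is nonnegative and nonzero. Since `ε x = ε y · t^(v g)`, the leading coefficient of `ε x` is that
constant term.
-/

open HahnSeries

theorem map_mul_inv_eq_sub {K Γ : Type*} [GroupWithZero K] [AddGroup Γ] (v : K → Γ)
    (hvmul : ∀ x y : K, x ≠ 0 → y ≠ 0 → v (x * y) = v x + v y) {x g : K}
    (hx : x ≠ 0) (hg : g ≠ 0) : v (x * g⁻¹) = v x - v g := by
  have h := hvmul (x * g⁻¹) g (mul_ne_zero hx (inv_ne_zero hg)) hg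
  rw [inv_mul_cancel_right₀ hg] at h
  exact eq_sub_of_add_eq h.symm

theorem HahnSeries.leadingCoeff_pos_of_order_eq_zero {Γ R : Type*} [LinearOrder Γ] [Zero Γ]
    [Zero R] [PartialOrder R] {a : HahnSeries Γ R} (ha : a ≠ 0) (horder : a.order = 0)
    (hcoeff : 0 ≤ a.coeff 0) : 0 < a.leadingCoeff := by
  have hne := leadingCoeff_ne_zero.mpr ha
  rw [leadingCoeff_eq, horder] at hne ⊢
  exact hcoeff.lt_of_ne hne.symm

theorem hahnSeries_embedding_orderPreserving_general {K : Type*} [Field K] [LinearOrder K] [IsStrictOrderedRing K]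
    {Γ : Type*} [AddCommGroup Γ] [LinearOrder Γ] [IsOrderedAddMonoid Γ]
    {k : Type*} [Field k] [LinearOrder k]
    (v : K → Γ)
    (hvmul : ∀ x y : K, x ≠ 0 → y ≠ 0 → v (x * y) = v x + v y)
    (ε : K →+* HahnSeries Γ k)
    (hval : ∀ x : K, x ≠ 0 → (ε x).order = v x)
    (hres : ∀ x : K, 0 ≤ x → (x = 0 ∨ 0 ≤ v x) → 0 ≤ (ε x).coeff 0)
    (G : Set K)
    (hGpos : ∀ g ∈ G, 0 < g)
    (hGsurj : ∀ γ : Γ, ∃ g ∈ G, v g = γ)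
    (hGmono : ∀ g ∈ G, ε g = HahnSeries.single (v g) (1 : k)) :
    ∀ x : K, 0 < x → 0 < (ε x).coeff (ε x).order := by
  intro x hx
  obtain ⟨g, hgG, hvg⟩ := hGsurj (v x)
  have hg := hGpos g hgG
  set y := x * g⁻¹
  have hy : 0 < y := mul_pos hx (inv_pos.mpr hg)
  have hvy : v y = 0 := by rw [map_mul_inv_eq_sub v hvmul hx.ne' hg.ne', hvg, sub_self]
  have hεx : ε x = ε y * single (v g) 1 := by
    rw [← hGmono g hgG, ← map_mul, inv_mul_cancel_right₀ hg.ne']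
  rw [← leadingCoeff_eq, hεx, leadingCoeff_mul, leadingCoeff_of_single, mul_one]
  exact leadingCoeff_pos_of_order_eq_zero ((map_ne_zero ε).mpr hy.ne')
    (by rw [hval y hy.ne', hvy]) (hres y hy.le (Or.inr hvy.ge))

/-- Let `K` be an ordered valued field with (order-compatible) valuation
`v` with value group `Γ` and residue field `k`, let `G ⊆ K^{>0}` be a monomial group,
and let `ε : K → k((Γ))` be an embedding of valued fields into the Hahn series field
such that `ε g = x ^ (v g)` for all `g ∈ G` and compatible with the (order-preserving)
residue map. Then `ε` preserves the order, where a Hahn series is positive iff its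
leading coefficient is positive. -/
theorem hahnSeries_embedding_orderPreserving {K : Type*} [Field K] [LinearOrder K] [IsStrictOrderedRing K]
    {Γ : Type*} [AddCommGroup Γ] [LinearOrder Γ] [IsOrderedAddMonoid Γ]
    {k : Type*} [Field k] [LinearOrder k] [IsStrictOrderedRing k]
    (v : K → Γ)
    (hvmul : ∀ x y : K, x ≠ 0 → y ≠ 0 → v (x * y) = v x + v y)
    (hconvex : ∀ x y : K, 0 < x → x ≤ y → v y ≤ v x)
    (ε : K →+* HahnSeries Γ k)
    (hval : ∀ x : K, x ≠ 0 → (ε x).order = v x)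
    (hres : ∀ x : K, 0 ≤ x → (x = 0 ∨ 0 ≤ v x) → 0 ≤ (ε x).coeff 0)
    (G : Set K)
    (hGpos : ∀ g ∈ G, 0 < g)
    (hGone : (1 : K) ∈ G)
    (hGmul : ∀ g ∈ G, ∀ h ∈ G, g * h ∈ G)
    (hGinv : ∀ g ∈ G, g⁻¹ ∈ G)
    (hGinj : ∀ g ∈ G, ∀ h ∈ G, v g = v h → g = h)
    (hGsurj : ∀ γ : Γ, ∃ g ∈ G, v g = γ)
    (hGmono : ∀ g ∈ G, ε g = HahnSeries.single (v g) (1 : k)) :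
    ∀ x : K, 0 < x → 0 < (ε x).coeff (ε x).order :=
  hahnSeries_embedding_orderPreserving_general v hvmul ε hval hres G hGpos hGsurj hGmono
end
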